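/- Suppose ⟨C_α | α < λ⟩ is a □^θ(λ)-sequence, and let 𝒟 be the covering matrix D(i,β) = {α < β | ρ_θ(α,β) ≤ i}. Then CP(𝒟) fails: for every unbounded T ⊆ λ there exists X ∈ [T]^θ not contained in any D(i,β). -/

import Mathlib

/-- The order type of a set of ordinals. -/
noncomputable def otp (X : Set Ordinal) : Ordinal.{1} :=
  Ordinal.type ((· < ·) : X → X → Prop)

/-- `δ` is an accumulation (limit) point of the set `C` of ordinals. -/
def IsAcc (C : Set Ordinal) (δ : Ordinal) : Prop :=
  0 < δ ∧ ∀ γ < δ, ∃ x ∈ C, γ < x ∧ x < δ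

/-- `C` is club in `α`. -/
def IsClubIn (C : Set Ordinal) (α : Ordinal) : Prop :=
  (∀ x ∈ C, x < α) ∧ (∀ γ < α, ∃ x ∈ C, γ ≤ x) ∧ (∀ δ < α, IsAcc C δ → δ ∈ C)

/-- `S` is stationary in `α`. -/
def IsStationaryIn (S : Set Ordinal) (α : Ordinal) : Prop :=
  ∀ C, IsClubIn C α → (S ∩ C).Nonempty

/-- `C` is a coherent sequence on `lam`: each `C α` is club in `α` for limit
`α < lam`, and if `α` is a limit point of `C β` then `C α = C β ∩ α`. -/
def Coherent (lam : Ordinal) (C : Ordinal → Set Ordinal) : Prop :=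
  (∀ α, α < lam → Order.IsSuccLimit α → IsClubIn (C α) α) ∧
  (∀ α β, β < lam → α < β → IsAcc (C β) α → C α = C β ∩ Set.Iio α)

/-- `T` threads the coherent sequence `C`: `T` is club in `lam` and agrees with
`C` at all of its limit points. -/
def IsThread (lam : Ordinal) (C : Ordinal → Set Ordinal) (T : Set Ordinal) : Prop :=
  IsClubIn T lam ∧ ∀ α, IsAcc T α → T ∩ Set.Iio α = C α

/-- A `□(lam)`-sequence: a coherent sequence with no thread. -/
def SqSeq (lam : Ordinal) (C : Ordinal → Set Ordinal) : Prop :=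
  Coherent lam C ∧ ¬ ∃ T, IsThread lam C T

/-- `L` is Todorcevic's function `Λ_θ` computed from the sequence `C`:
`Λ_θ(α,β)` is the largest `ξ ∈ C β ∩ (α+1)` with `θ ∣ otp (C β ∩ ξ)`. -/
def IsLambda (θ lam : Ordinal) (C : Ordinal → Set Ordinal)
    (L : Ordinal → Ordinal → Ordinal) : Prop :=
  ∀ α β, α < β → β < lam →
    L α β ∈ C β ∧ L α β ≤ α ∧
    Ordinal.lift.{1,0} θ ∣ otp (C β ∩ Set.Iio (L α β)) ∧
    ∀ ξ ∈ C β, ξ ≤ α → Ordinal.lift.{1,0} θ ∣ otp (C β ∩ Set.Iio ξ) → ξ ≤ L α β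

/-- `rho` is Todorcevic's function `ρ_θ`, characterized by its recursive equation
`ρ_θ(α,β) = sup {otp (C β ∩ [Λ_θ(α,β), α)), ρ_θ(α, min (C β \ α)),
ρ_θ(ξ, α) : ξ ∈ C β ∩ [Λ_θ(α,β), α)}` together with `ρ_θ(α,α) = 0`. -/
def IsRho (θ lam : Ordinal) (C : Ordinal → Set Ordinal)
    (L rho : Ordinal → Ordinal → Ordinal) : Prop :=
  (∀ α, rho α α = 0) ∧
  ∀ α β, α < β → β < lam →
    Ordinal.lift.{1,0} (rho α β) =
      max (otp (C β ∩ Set.Ico (L α β) α))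
        (max (Ordinal.lift.{1,0} (rho α (sInf (C β ∩ Set.Ici α))))
          (sSup {x : Ordinal.{1} |
            ∃ ξ ∈ C β ∩ Set.Ico (L α β) α, x = Ordinal.lift.{1,0} (rho ξ α)}))

lemma otp_mono {A B : Set Ordinal} (h : A ⊆ B) : otp A ≤ otp B :=
  RelEmbedding.ordinal_type_le
    ⟨⟨Set.inclusion h, Set.inclusion_injective h⟩, Iff.rfl⟩

lemma otp_eq_typein {A : Set Ordinal} {a : Ordinal} (ha : a ∈ A) :
    otp (A ∩ Set.Iio a) = Ordinal.typein ((· < ·) : A → A → Prop) ⟨a, ha⟩ := by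
  rw [← Ordinal.type_subrel]
  apply RelIso.ordinal_type_eq
  exact ⟨⟨fun y => ⟨⟨y.1, y.2.1⟩, y.2.2⟩, fun x => ⟨x.1.1, x.1.2, x.2⟩,
    fun y => rfl, fun x => rfl⟩, Iff.rfl⟩

lemma otp_Iio_lt {A : Set Ordinal} {a : Ordinal} (ha : a ∈ A) :
    otp (A ∩ Set.Iio a) < otp A := by
  rw [otp_eq_typein ha]; exact Ordinal.typein_lt_type _ _

lemma otp_enum {A : Set Ordinal} {i : Ordinal.{1}} (h : i < otp A) :
    ∃ a ∈ A, otp (A ∩ Set.Iio a) = i := by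
  obtain ⟨a, ha⟩ := Ordinal.typein_surj ((· < ·) : A → A → Prop) h
  exact ⟨a.1, a.2, by rw [otp_eq_typein a.2]; exact ha⟩

lemma cof_le_mk {α : Ordinal.{0}} {S : Set Ordinal.{0}}
    (hlt : ∀ x ∈ S, x < α) (hu : ∀ γ < α, ∃ x ∈ S, γ ≤ x) :
    Cardinal.lift.{1,0} α.cof ≤ Cardinal.mk S := by
  set g : S → Ordinal.{1} := fun x => Ordinal.lift.{1,0} x.1 with hg
  have hlsub : Ordinal.lsub.{1,0} g = Ordinal.lift.{1,0} α := by
    apply le_antisymm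
    · exact Ordinal.lsub_le.{1,0} fun x => Ordinal.lift_lt.2 (hlt x.1 x.2)
    · by_contra hc
      push_neg at hc
      obtain ⟨γ, hγα, hγe⟩ := Ordinal.lt_lift_iff.1 hc
      obtain ⟨x, hxS, hγx⟩ := hu γ hγα
      have h3 := Ordinal.lt_lsub.{1,0} g ⟨x, hxS⟩
      rw [← hγe] at h3
      exact absurd (Ordinal.lift_lt.1 h3) (not_lt.2 hγx)
  calc Cardinal.lift.{1,0} α.cof = (Ordinal.lift.{1,0} α).cof := Ordinal.lift_cof α
    _ = (Ordinal.lsub.{1,0} g).cof := by rw [hlsub]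
    _ ≤ Cardinal.mk S := Ordinal.cof_lsub_le.{1} g

lemma otp_big {α ν : Ordinal.{0}} {S : Set Ordinal.{0}}
    (hlt : ∀ x ∈ S, x < α) (hu : ∀ γ < α, ∃ x ∈ S, γ ≤ x)
    (hν : ν < α.cof.ord) : Ordinal.lift.{1,0} ν < otp S := by
  by_contra h
  push_neg at h
  have hcard : (Cardinal.mk S) ≤ Cardinal.lift.{1,0} ν.card := by
    have h1 := Ordinal.card_le_card h
    rw [otp, Ordinal.card_type, ← Ordinal.lift_card] at h1
    exact h1
  have h2 : Cardinal.mk S < Cardinal.lift.{1,0} α.cof :=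
    hcard.trans_lt (Cardinal.lift_lt.2 (Cardinal.lt_ord.1 hν))
  exact absurd h2 (not_lt.2 (cof_le_mk hlt hu))
lemma base_step {θ lam : Cardinal} {C : Ordinal → Set Ordinal}
    {L rho : Ordinal → Ordinal → Ordinal}
    (hL : IsLambda θ.ord lam.ord C L) (hrho : IsRho θ.ord lam.ord C L rho)
    {α β : Ordinal} (hαβ : α ≤ β) (hβ : β < lam.ord) (hcof : α.cof = θ)
    (hCα : ∀ x ∈ C α, x < α) (hCαu : ∀ γ < α, ∃ x ∈ C α, γ ≤ x)
    (hE : C β ∩ Set.Iio α = C α)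
    {ξ : Ordinal} (hξα : ξ < α) (hξ : ∀ γ ∈ C α, Ordinal.lift.{1,0} θ.ord ∣ otp (C α ∩ Set.Iio γ) → γ ≤ ξ)
    {X : Set Ordinal} (hX : ∀ γ < α, ∃ x ∈ X, γ < x ∧ x < α)
    {i : Ordinal} (hi : i < θ.ord) {γ : Ordinal} (hγ : γ < α) :
    ∃ x ∈ X, γ < x ∧ x < α ∧ Ordinal.lift.{1,0} i < Ordinal.lift.{1,0} (rho x β) := by
  set S' : Set Ordinal := C α ∩ Set.Ici ξ with hS'
  have hS'lt : ∀ x ∈ S', x < α := fun x hx => hCα x hx.1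
  have hS'u : ∀ δ < α, ∃ x ∈ S', δ ≤ x := by
    intro δ hδ
    rcases lt_or_ge δ ξ with hc | hc
    · obtain ⟨x, hx1, hx2⟩ := hCαu ξ hξα
      exact ⟨x, ⟨hx1, hx2⟩, (hc.trans_le hx2).le⟩
    · obtain ⟨x, hx1, hx2⟩ := hCαu δ hδ
      exact ⟨x, ⟨hx1, hc.trans hx2⟩, hx2⟩
  have hio : Ordinal.lift.{1,0} i < otp S' := otp_big hS'lt hS'u (hcof ▸ hi)
  obtain ⟨s, hsS', hseq⟩ := otp_enum hio
  have hsα : s < α := hS'lt s hsS'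
  obtain ⟨x, hxX, hγsx, hxα⟩ := hX (max γ s) (max_lt hγ hsα)
  have hγx : γ < x := (le_max_left γ s).trans_lt hγsx
  have hsx : s < x := (le_max_right γ s).trans_lt hγsx
  refine ⟨x, hxX, hγx, hxα, ?_⟩
  have hxβ : x < β := hxα.trans_le hαβ
  obtain ⟨hL1, hL2, hL3, -⟩ := hL x β hxβ hβ
  have hLα : L x β ∈ C α := by rw [← hE]; exact ⟨hL1, hL2.trans_lt hxα⟩
  have hLltα : L x β < α := hL2.trans_lt hxα
  have hset : C β ∩ Set.Iio (L x β) = C α ∩ Set.Iio (L x β) := by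
    rw [← hE]; ext y
    exact ⟨fun hy => ⟨⟨hy.1, hy.2.trans hLltα⟩, hy.2⟩, fun hy => ⟨hy.1.1, hy.2⟩⟩
  have hLξ : L x β ≤ ξ := hξ _ hLα (by rw [← hset]; exact hL3)
  have hsub : S' ∩ Set.Iio x ⊆ C β ∩ Set.Ico (L x β) x := by
    rintro y ⟨⟨hy1, hy2⟩, hy3⟩
    have : y ∈ C β ∩ Set.Iio α := by rw [hE]; exact hy1
    exact ⟨this.1, hLξ.trans hy2, hy3⟩
  have heq := (hrho.2 x β hxβ hβ)
  have hlast : Ordinal.lift.{1,0} i < otp (S' ∩ Set.Iio x) := by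
    rw [← hseq]
    have h4 : S' ∩ Set.Iio s = (S' ∩ Set.Iio x) ∩ Set.Iio s := by
      ext y
      exact ⟨fun hy => ⟨⟨hy.1, hy.2.trans hsx⟩, hy.2⟩, fun hy => ⟨hy.1.1, hy.2⟩⟩
    rw [h4]
    exact otp_Iio_lt ⟨hsS', hsx⟩
  calc Ordinal.lift.{1,0} i < otp (S' ∩ Set.Iio x) := hlast
    _ ≤ otp (C β ∩ Set.Ico (L x β) x) := otp_mono hsub
    _ ≤ Ordinal.lift.{1,0} (rho x β) := by rw [heq]; exact le_max_left _ _

lemma main_ind {θ lam : Cardinal} {C : Ordinal → Set Ordinal}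
    {L rho : Ordinal → Ordinal → Ordinal}
    (hL : IsLambda θ.ord lam.ord C L) (hrho : IsRho θ.ord lam.ord C L rho)
    (hcoh : ∀ a b, b < lam.ord → a < b → IsAcc (C b) a → C a = C b ∩ Set.Iio a)
    (hclub : ∀ a, a < lam.ord → Order.IsSuccLimit a → IsClubIn (C a) a)
    (hsucc : ∀ a, a + 1 < lam.ord → C (a + 1) = {a})
    {α : Ordinal} (hαlam : α < lam.ord) (hαlim : Order.IsSuccLimit α) (hcof : α.cof = θ)
    {ξ : Ordinal} (hξα : ξ < α)
    (hξ : ∀ γ ∈ C α, Ordinal.lift.{1,0} θ.ord ∣ otp (C α ∩ Set.Iio γ) → γ ≤ ξ)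
    {X : Set Ordinal} (hX : ∀ γ < α, ∃ x ∈ X, γ < x ∧ x < α) :
    ∀ β, α ≤ β → β < lam.ord → ∀ i < θ.ord, ∀ γ < α,
      ∃ x ∈ X, γ < x ∧ x < α ∧ Ordinal.lift.{1,0} i < Ordinal.lift.{1,0} (rho x β) := by
  have hclubα := hclub α hαlam hαlim
  have hCα : ∀ x ∈ C α, x < α := hclubα.1
  have hCαu : ∀ γ < α, ∃ x ∈ C α, γ ≤ x := hclubα.2.1
  have hbase : ∀ i < θ.ord, ∀ γ < α, ∃ x ∈ X, γ < x ∧ x < α ∧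
      Ordinal.lift.{1,0} i < Ordinal.lift.{1,0} (rho x α) := by
    intro i hi γ hγ
    refine base_step hL hrho le_rfl hαlam hcof hCα hCαu ?_ hξα hξ hX hi hγ
    ext y; exact ⟨fun h => h.1, fun h => ⟨h, hCα y h⟩⟩
  intro β
  induction β using Ordinal.induction with
  | _ β IH =>
  intro hαβ hβ i hi γ hγ
  rcases eq_or_lt_of_le hαβ with rfl | hαβ'
  · exact hbase i hi γ hγ
  have hfacts : (∀ x ∈ C β, x < β) ∧ (C β ∩ Set.Ici α).Nonempty := by
    rcases Ordinal.zero_or_succ_or_isSuccLimit β with h0 | ⟨ζ, rfl⟩ | hlim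
    · exact absurd (h0 ▸ hαβ') (not_lt_zero (a := α))
    · have hζ : C (Order.succ ζ) = {ζ} := by
        rw [← Ordinal.add_one_eq_succ] at hβ ⊢
        exact hsucc ζ hβ
      rw [hζ]
      constructor
      · rintro x rfl
        exact Order.lt_succ _
      · exact ⟨ζ, rfl, Order.lt_succ_iff.1 hαβ'⟩
    · exact ⟨(hclub β hβ hlim).1, by
        obtain ⟨x, hx1, hx2⟩ := (hclub β hβ hlim).2.1 α hαβ'
        exact ⟨x, hx1, hx2⟩⟩
  set b1 := sInf (C β ∩ Set.Ici α) with hb1def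
  have hb1 : b1 ∈ C β ∩ Set.Ici α := csInf_mem hfacts.2
  by_cases hacc : IsAcc (C β) α
  · refine base_step hL hrho hαβ hβ hcof hCα hCαu ?_ hξα hξ hX hi hγ
    exact (hcoh α β hβ hαβ' hacc).symm
  · have h0 : ∃ γ₀ < α, ∀ y ∈ C β, ¬(γ₀ < y ∧ y < α) := by
      by_contra hcon
      push_neg at hcon
      refine hacc ⟨hαlim.pos, fun δ hδ => ?_⟩
      obtain ⟨y, hy, h1, h2⟩ := hcon δ hδ
      exact ⟨y, hy, h1, h2⟩
    obtain ⟨γ₀, hγ₀α, hγ₀⟩ := h0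
    have hkey : ∀ x, γ₀ < x → x < α → C β ∩ Set.Ici x = C β ∩ Set.Ici α := by
      intro x h1 h2
      ext y
      constructor
      · rintro ⟨hy, hxy⟩
        refine ⟨hy, ?_⟩
        by_contra hyα
        rw [Set.mem_Ici, not_le] at hyα
        exact hγ₀ y hy ⟨h1.trans_le hxy, hyα⟩
      · rintro ⟨hy, hαy⟩
        exact ⟨hy, h2.le.trans hαy⟩
    have hstep : ∀ x, γ₀ < x → x < α →
        Ordinal.lift.{1,0} (rho x b1) ≤ Ordinal.lift.{1,0} (rho x β) := by
      intro x h1 h2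
      have hxβ : x < β := h2.trans hαβ'
      have heq := hrho.2 x β hxβ hβ
      rw [hkey x h1 h2] at heq
      rw [heq]
      exact le_trans (le_max_left _ _) (le_max_right _ _)
    rcases eq_or_lt_of_le (Set.mem_Ici.1 hb1.2) with hb1α | hb1α
    · obtain ⟨x, hxX, hγx, hxα, hx⟩ := hbase i hi (max γ γ₀) (max_lt hγ hγ₀α)
      refine ⟨x, hxX, (le_max_left γ γ₀).trans_lt hγx, hxα, ?_⟩
      have := hstep x ((le_max_right γ γ₀).trans_lt hγx) hxα
      rw [← hb1α] at this
      exact hx.trans_le this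
    · have hb1β : b1 < β := hfacts.1 _ hb1.1
      obtain ⟨x, hxX, hγx, hxα, hx⟩ :=
        IH b1 hb1β hb1α.le (hb1β.trans hβ) i hi (max γ γ₀) (max_lt hγ hγ₀α)
      exact ⟨x, hxX, (le_max_left γ γ₀).trans_lt hγx, hxα,
        hx.trans_le (hstep x ((le_max_right γ γ₀).trans_lt hγx) hxα)⟩

/-- If `C` is a `□^θ(lam)`-sequence (a `□(lam)`-sequence such that
`{α ∈ S^lam_θ | C_α^{[θ]} is bounded below α}` is stationary), then `CP` fails for the
matrix `D(i,β) = {α < β | ρ_θ(α,β) ≤ i}`: every unbounded `T ⊆ lam` has a subset of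
size `θ` contained in no `D(i,β)`. -/
theorem stmt_9 (θ lam : Cardinal) (hθ : θ.IsRegular) (hlam : lam.IsRegular)
    (hlt : θ < lam) (C : Ordinal → Set Ordinal) (hsq : SqSeq lam.ord C)
    (hsucc : ∀ α, α + 1 < lam.ord → C (α + 1) = {α})
    (hsqθ : IsStationaryIn
      {α | α < lam.ord ∧ α.cof = θ ∧
        ∃ ξ < α, ∀ γ ∈ C α, Ordinal.lift.{1,0} θ.ord ∣ otp (C α ∩ Set.Iio γ) → γ ≤ ξ}
      lam.ord)
    (L rho : Ordinal → Ordinal → Ordinal)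
    (hL : IsLambda θ.ord lam.ord C L) (hrho : IsRho θ.ord lam.ord C L rho)
    (T : Set Ordinal) (hTsub : T ⊆ Set.Iio lam.ord)
    (hTunb : ∀ γ < lam.ord, ∃ x ∈ T, γ ≤ x) :
    ∃ X ⊆ T, Cardinal.mk X = Cardinal.lift.{1,0} θ ∧
      ∀ i < θ.ord, ∀ β < lam.ord, ¬ X ⊆ {α | α < β ∧ rho α β ≤ i} := by

  have limord : Order.IsSuccLimit lam.ord := Cardinal.isSuccLimit_ord hlam.aleph0_le
  have hstep : ∀ δ : Ordinal, δ < lam.ord → ∃ t, t ∈ T ∧ δ < t := by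
    intro δ hδ
    have hδ1 : δ + 1 < lam.ord := by
      rw [Ordinal.add_one_eq_succ]; exact limord.succ_lt hδ
    obtain ⟨x, hx, hge⟩ := hTunb (δ + 1) hδ1
    exact ⟨x, hx, lt_of_lt_of_le (by rw [Ordinal.add_one_eq_succ]; exact Order.lt_succ δ) hge⟩
  set D : Set Ordinal := {δ | δ < lam.ord ∧ ∀ γ < δ, ∃ t ∈ T, γ < t ∧ t < δ} with hD
  have hDclub : IsClubIn D lam.ord := by
    refine ⟨fun x hx => hx.1, ?_, ?_⟩
    · intro γ hγ
      have hT' : ∀ t : T, (t : Ordinal) < lam.ord := fun t => hTsub t.2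
      let F : T → T := fun t => ⟨(hstep t (hT' t)).choose, (hstep t (hT' t)).choose_spec.1⟩
      have hF : ∀ t : T, (t : Ordinal) < F t := fun t => (hstep t (hT' t)).choose_spec.2
      obtain ⟨t₀, ht₀T, hγt₀⟩ := hstep γ hγ
      set f : ℕ → T := fun n => F^[n] ⟨t₀, ht₀T⟩ with hf
      have hmono : ∀ n, (f n : Ordinal) < (f (n+1) : Ordinal) := by
        intro n
        have h1 : f (n+1) = F (f n) := Function.iterate_succ_apply' F n _
        rw [h1]; exact hF (f n)
      set g : ℕ → Ordinal := fun n => (f n : Ordinal) with hg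
      have hglt : ∀ n, g n < lam.ord := fun n => hT' (f n)
      have hsuplt : iSup g < lam.ord := by
        refine Ordinal.iSup_lt_ord ?_ hglt
        rw [Cardinal.mk_nat, hlam.cof_eq]
        exact hθ.aleph0_le.trans_lt hlt
      refine ⟨iSup g, ⟨hsuplt, ?_⟩, ?_⟩
      · intro γ' hγ'
        obtain ⟨n, hn⟩ := Ordinal.lt_iSup_iff.1 hγ'
        exact ⟨g n, (f n).2, hn, (hmono n).trans_le (Ordinal.le_iSup g (n+1))⟩
      · exact hγt₀.le.trans (Ordinal.le_iSup g 0)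
    · intro δ hδ hAcc
      refine ⟨hδ, fun γ hγδ => ?_⟩
      obtain ⟨d, hdD, hγd, hdδ⟩ := hAcc.2 γ hγδ
      obtain ⟨t, htT, hγt, htd⟩ := hdD.2 γ hγd
      exact ⟨t, htT, hγt, htd.trans hdδ⟩
  obtain ⟨α, hαS, hαD⟩ := hsqθ D hDclub
  obtain ⟨hαlam, hcof, ξ, hξα, hξ⟩ := hαS
  have hTα : ∀ γ < α, ∃ t ∈ T, γ < t ∧ t < α := hαD.2
  have hαlim : Order.IsSuccLimit α := Ordinal.aleph0_le_cof.1 (by rw [hcof]; exact hθ.aleph0_le)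
  -- construct X
  have hmem : ∃ (ι : Type) (f : ι → Ordinal), Ordinal.lsub.{0,0} f = α ∧ Cardinal.mk ι = α.cof := by
    have h1 := csInf_mem (Ordinal.cof_lsub_def_nonempty α)
    rw [← Ordinal.cof_eq_sInf_lsub] at h1
    exact h1
  obtain ⟨ι, f, hflsub, hfmk⟩ := hmem
  have hfi : ∀ j : ι, f j < α := fun j => hflsub ▸ Ordinal.lt_lsub f j
  choose t ht1 ht2 ht3 using fun j : ι => hTα (f j) (hfi j)
  set X : Set Ordinal := Set.range t with hXdef
  have hXsub : X ⊆ T := by rintro _ ⟨j, rfl⟩; exact ht1 j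
  have hXunb : ∀ γ < α, ∃ x ∈ X, γ < x ∧ x < α := by
    intro γ hγ
    have h2 : γ < Ordinal.lsub.{0,0} f := by rw [hflsub]; exact hγ
    obtain ⟨j, hj⟩ := Ordinal.lt_lsub_iff.1 h2
    exact ⟨t j, ⟨j, rfl⟩, hj.trans_lt (ht2 j), ht3 j⟩
  have hXcard : Cardinal.mk X = Cardinal.lift.{1,0} θ := by
    apply le_antisymm
    · have h3 := Cardinal.mk_range_le_lift (f := t)
      rw [Cardinal.lift_uzero, hfmk, hcof] at h3
      exact h3
    · have h4 : ∀ x ∈ X, x < α := by rintro _ ⟨j, rfl⟩; exact ht3 j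
      have h5 : ∀ γ < α, ∃ x ∈ X, γ ≤ x := by
        intro γ hγ
        obtain ⟨x, hx1, hx2, hx3⟩ := hXunb γ hγ
        exact ⟨x, hx1, hx2.le⟩
      have h6 := cof_le_mk h4 h5
      rw [hcof] at h6
      exact h6
  refine ⟨X, hXsub, hXcard, ?_⟩
  intro i hi β hβ hsubset
  rcases le_or_gt α β with hc | hc
  · obtain ⟨x, hxX, -, -, hx⟩ := main_ind hL hrho hsq.1.2 hsq.1.1 hsucc hαlam hαlim hcof
      hξα hξ hXunb β hc hβ i hi 0 hαlim.pos
    exact absurd (Ordinal.lift_le.2 (hsubset hxX).2) (not_le.2 hx)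
  · obtain ⟨x, hxX, hβx, -⟩ := hXunb β hc
    exact absurd (hsubset hxX).1 (not_lt.2 hβx.le)
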